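/- arXiv:0710.3250 — 2 statements merged into one kernel-verified Lean document; each statement's English description precedes it below -/
import Mathlib

section
/- Let K be a field and let q ∈ K be of free type, i.e., q ≠ 0 and {n}_q ≠ 0 for every nonzero integer n (equivalently: q^n ≠ 1 for every nonzero integer n when q ≠ 1, and char K = 0 when q = 1). Then the center of the q-deformed Heisenberg algebra H_q over K is trivial: Z(H_q) = K·1, the set of scalar multiples of the identity. -/
noncomputable section

open Classical in
/-- The `q`-integer `{n}_q = (qⁿ − 1)/(q − 1)` for `q ≠ 1`, and `{n}_q = n·1_K` for `q = 1`. -/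
def qInt (K : Type*) [Field K] (q : K) (n : ℤ) : K :=
  if q = 1 then (n : K) else (q ^ n - 1) / (q - 1)

/-- The defining relation `AB = q·BA + 1` of the `q`-deformed Heisenberg algebra,
imposed on the free algebra on two generators. -/
inductive qHeisRel (K : Type*) [Field K] (q : K) :
    FreeAlgebra K (Fin 2) → FreeAlgebra K (Fin 2) → Prop
  | rel : qHeisRel K q (FreeAlgebra.ι K 0 * FreeAlgebra.ι K 1)
      (q • (FreeAlgebra.ι K 1 * FreeAlgebra.ι K 0) + 1)

/-- The `q`-deformed Heisenberg algebra `H_q = K⟨A,B⟩/⟨AB − qBA − 1⟩`. -/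
abbrev qHeis (K : Type*) [Field K] (q : K) : Type _ := RingQuot (qHeisRel K q)

/-- The generator `A` of `H_q`. -/
def qA (K : Type*) [Field K] (q : K) : qHeis K q :=
  RingQuot.mkAlgHom K (qHeisRel K q) (FreeAlgebra.ι K 0)

/-- The generator `B` of `H_q`. -/
def qB (K : Type*) [Field K] (q : K) : qHeis K q :=
  RingQuot.mkAlgHom K (qHeisRel K q) (FreeAlgebra.ι K 1)

/-! `H_q` acts on `K[X]`, with `B` acting as multiplication by `X` and `A` as the Jackson
`q`-derivative `Xⁿ ↦ {n}_q Xⁿ⁻¹`. An operator commuting with multiplication by `X` is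
multiplication by the polynomial `f` it sends `1` to; if it also commutes with the `q`-derivative,
then `D_q f = 0`, so `f` is constant because `{n}_q ≠ 0` for `n ≥ 1`. The action is faithful: the
ordered monomials `Bⁱ Aʲ` span `H_q`, and their images are linearly independent, as one sees by
applying a vanishing combination to `Xʲ` for the least `j` that occurs. So a central element acts
as a scalar, hence is one. -/

open Polynomial

section

variable {K : Type*} [Field K] (q : K)

theorem qInt_zero : qInt K q 0 = 0 := by
  unfold qInt; split_ifs <;> simp

theorem qInt_natCast_succ (n : ℕ) : qInt K q (n + 1) = q * qInt K q n + 1 := by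
  unfold qInt
  split_ifs with h
  · subst h; push_cast; ring
  · have : q - 1 ≠ 0 := sub_ne_zero.mpr h
    rw [← Nat.cast_succ, zpow_natCast, zpow_natCast, pow_succ]
    field_simp
    ring

theorem qInt_one : qInt K q 1 = 1 := by
  simpa [qInt_zero] using qInt_natCast_succ q 0

-- at `n = 0` the truncated `n - 1` is harmless, since `{0}_q = 0`
def qDeriv : K[X] →ₗ[K] K[X] := lsum fun n => qInt K q n • monomial (n - 1)

theorem qDeriv_monomial (n : ℕ) (a : K) :
    qDeriv q (monomial n a) = monomial (n - 1) (qInt K q n * a) := by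
  simp [qDeriv, sum_monomial_index, smul_monomial]

theorem coeff_qDeriv (p : K[X]) (n : ℕ) :
    (qDeriv q p).coeff n = qInt K q (n + 1) * p.coeff (n + 1) := by
  induction p using Polynomial.induction_on' with
  | add p r hp hr => simp [hp, hr, mul_add]
  | monomial m a =>
    rw [qDeriv_monomial, coeff_monomial, coeff_monomial]
    rcases m with _ | m
    · simp [qInt_zero]
    · simp only [add_tsub_cancel_right, add_left_inj]
      split_ifs with h <;> simp [h]

theorem qDeriv_X_mul (p : K[X]) : qDeriv q (X * p) = q • (X * qDeriv q p) + p := by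
  ext n
  rcases n with _ | n
  · simp [coeff_qDeriv, qInt_one]
  · have := qInt_natCast_succ q (n + 1)
    push_cast at this
    simp [coeff_qDeriv, this, add_mul, mul_assoc]

theorem qDeriv_pow_X_pow (j m : ℕ) :
    (qDeriv q ^ j) (X ^ m) = (∏ k ∈ Finset.range j, qInt K q (m - k : ℕ)) • X ^ (m - j) := by
  induction j with
  | zero => simp
  | succ j ih =>
    rw [pow_succ', Module.End.mul_apply, ih, map_smul, ← monomial_one_right_eq_X_pow,
      qDeriv_monomial, Finset.prod_range_succ, smul_monomial,
      ← monomial_one_right_eq_X_pow, smul_monomial]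
    simp [Nat.sub_sub, mul_comm]

theorem eq_C_of_qDeriv_eq_zero (hfree : ∀ n : ℕ, qInt K q (n + 1) ≠ 0) {p : K[X]}
    (hp : qDeriv q p = 0) : p = C (p.coeff 0) := by
  ext (_ | n)
  · simp
  · have := congr_arg (coeff · n) hp
    simpa [coeff_qDeriv, hfree n, coeff_C] using this

theorem eq_algebraMap_of_commute_mulLeft_X_qDeriv (hfree : ∀ n : ℕ, qInt K q (n + 1) ≠ 0)
    {T : Module.End K K[X]} (hX : Commute T (LinearMap.mulLeft K X))
    (hD : Commute T (qDeriv q)) : T = algebraMap K _ ((T 1).coeff 0) := by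
  have hT_X_mul (p : K[X]) : T (X * p) = X * T p := LinearMap.congr_fun hX.eq p
  have hT_mul (p : K[X]) : T p = p * T 1 := by
    induction p using Polynomial.induction_on with
    | C a => rw [← mul_one (C a), ← smul_eq_C_mul, map_smul, smul_mul_assoc, one_mul]
    | add p r hp hr => rw [map_add, hp, hr, add_mul]
    | monomial n a ih => rw [pow_succ', mul_left_comm, hT_X_mul, ih, ← mul_assoc]
  have hT_one : T 1 = C ((T 1).coeff 0) := by
    refine eq_C_of_qDeriv_eq_zero q hfree ?_
    have hD_one : qDeriv q 1 = 0 := by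
      rw [← monomial_zero_one, qDeriv_monomial, Nat.cast_zero, qInt_zero, zero_mul, map_zero]
    rw [← Module.End.mul_apply, ← hD.eq, Module.End.mul_apply, hD_one, map_zero]
  refine LinearMap.ext fun p => ?_
  rw [hT_mul, hT_one, Module.algebraMap_end_apply, coeff_C_zero, mul_comm, C_mul']

section

variable {R : Type*} [Ring R] [Algebra K R] {a b : R}

theorem pow_succ_mul_eq_of_mul_eq (h : a * b = q • (b * a) + 1) (n : ℕ) :
    a ^ (n + 1) * b = q ^ (n + 1) • (b * a ^ (n + 1)) + qInt K q (n + 1) • a ^ n := by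
  induction n with
  | zero => simpa [qInt_one] using h
  | succ n ih =>
    calc a ^ (n + 2) * b = q • ((a ^ (n + 1) * b) * a) + a ^ (n + 1) := by
          rw [pow_succ, mul_assoc, h, mul_add, mul_smul_comm, mul_one, ← mul_assoc]
      _ = q ^ (n + 2) • (b * a ^ (n + 2)) + (q * qInt K q (n + 1) + 1) • a ^ (n + 1) := by
          rw [ih]
          simp only [add_mul, smul_mul_assoc, mul_assoc, ← pow_succ, smul_add, smul_smul, add_smul,
            one_smul]
          module
      _ = _ := by rw [qInt_natCast_succ q (n + 1), Nat.cast_succ]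

theorem span_pow_mul_pow_eq_top (h : a * b = q • (b * a) + 1)
    (hgen : Algebra.adjoin K {a, b} = ⊤) :
    Submodule.span K (Set.range fun p : ℕ × ℕ => b ^ p.1 * a ^ p.2) = ⊤ := by
  set S := Submodule.span K (Set.range fun p : ℕ × ℕ => b ^ p.1 * a ^ p.2)
  have hmem (i j : ℕ) : b ^ i * a ^ j ∈ S := Submodule.subset_span ⟨(i, j), rfl⟩
  have mul_mem_of_forall {x : R} (hx : ∀ i j, b ^ i * a ^ j * x ∈ S) (s : R) (hs : s ∈ S) :
      s * x ∈ S :=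
    Submodule.span_le (p := S.comap (LinearMap.mulRight K x)) |>.mpr
      (by rintro _ ⟨⟨i, j⟩, rfl⟩; exact hx i j) hs
  have key : ∀ x ∈ Algebra.adjoin K {a, b}, ∀ s ∈ S, s * x ∈ S := by
    intro x hx
    induction hx using Algebra.adjoin_induction with
    | mem x hx =>
      rcases hx with rfl | rfl
      · refine mul_mem_of_forall (fun i j => ?_)
        rw [mul_assoc, ← pow_succ]
        exact hmem i (j + 1)
      · refine mul_mem_of_forall (fun i j => ?_)
        rcases j with _ | j
        · rw [pow_zero, mul_one, ← pow_succ]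
          simpa using hmem (i + 1) 0
        · rw [mul_assoc, pow_succ_mul_eq_of_mul_eq q h, mul_add, mul_smul_comm, mul_smul_comm,
            ← mul_assoc, ← pow_succ]
          exact S.add_mem (S.smul_mem _ (hmem _ _)) (S.smul_mem _ (hmem _ _))
    | algebraMap r =>
      intro s hs
      rw [← Algebra.commutes, ← Algebra.smul_def]
      exact S.smul_mem r hs
    | add x y _ _ hx hy => intro s hs; rw [mul_add]; exact S.add_mem (hx s hs) (hy s hs)
    | mul x y _ _ hx hy => intro s hs; rw [← mul_assoc]; exact hy _ (hx s hs)
  refine Submodule.eq_top_iff'.mpr fun x => ?_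
  simpa using key x (hgen ▸ Algebra.mem_top) 1 (by simpa using hmem 0 0)

end

theorem qA_mul_qB : qA K q * qB K q = q • (qB K q * qA K q) + 1 := by
  simpa [qA, qB] using RingQuot.mkAlgHom_rel K (qHeisRel.rel (K := K) (q := q))

theorem adjoin_qA_qB_eq_top : Algebra.adjoin K {qA K q, qB K q} = ⊤ := by
  have : {qA K q, qB K q} =
      RingQuot.mkAlgHom K (qHeisRel K q) '' Set.range (FreeAlgebra.ι K) := by
    rw [← Set.range_comp]
    ext
    simp [Fin.exists_fin_two, qA, qB, eq_comm]
  rw [this, Algebra.adjoin_image, FreeAlgebra.adjoin_range_ι, Algebra.map_top,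
    AlgHom.range_eq_top]
  exact RingQuot.mkAlgHom_surjective K _

def qHeisRep : qHeis K q →ₐ[K] Module.End K K[X] :=
  RingQuot.liftAlgHom K ⟨FreeAlgebra.lift K ![qDeriv q, LinearMap.mulLeft K X], by
    rintro _ _ ⟨⟩
    refine LinearMap.ext fun p => ?_
    simpa using qDeriv_X_mul q p⟩

theorem qHeisRep_qA : qHeisRep q (qA K q) = qDeriv q := by
  simp [qHeisRep, qA]

theorem qHeisRep_qB : qHeisRep q (qB K q) = LinearMap.mulLeft K X := by
  simp [qHeisRep, qB]

theorem mulLeft_X_pow_mul_qDeriv_pow_apply_X_pow (i j m : ℕ) :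
    (LinearMap.mulLeft K X ^ i * qDeriv q ^ j : Module.End K K[X]) (X ^ m) =
      (∏ k ∈ Finset.range j, qInt K q (m - k : ℕ)) • X ^ (i + (m - j)) := by
  rw [LinearMap.pow_mulLeft, Module.End.mul_apply, qDeriv_pow_X_pow, LinearMap.mulLeft_apply,
    mul_smul_comm, pow_add]

theorem linearIndependent_mulLeft_X_pow_mul_qDeriv_pow (hfree : ∀ n : ℕ, qInt K q (n + 1) ≠ 0) :
    LinearIndependent K
      fun p : ℕ × ℕ => LinearMap.mulLeft K (X : K[X]) ^ p.1 * qDeriv q ^ p.2 := by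
  rw [linearIndependent_iff]
  intro c hc
  suffices ∀ j i, c (i, j) = 0 from Finsupp.ext fun p => this p.2 p.1
  intro j
  induction j using Nat.strong_induction_on with
  | _ j IH =>
    intro i
    have h := congr_arg (coeff · i) (LinearMap.congr_fun hc (X ^ j))
    simp only [Finsupp.linearCombination_apply, Finsupp.sum, LinearMap.sum_apply,
      LinearMap.smul_apply, mulLeft_X_pow_mul_qDeriv_pow_apply_X_pow, finsetSum_coeff, coeff_smul,
      coeff_X_pow, smul_eq_mul, LinearMap.zero_apply, coeff_zero] at h
    have hprod : ∏ k ∈ Finset.range j, qInt K q (j - k : ℕ) ≠ 0 :=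
      Finset.prod_ne_zero_iff.mpr fun k hk => by
        obtain ⟨n, hn⟩ := Nat.exists_eq_add_of_lt (Finset.mem_range.mp hk)
        simpa [hn, Nat.add_sub_cancel_left, add_assoc] using hfree n
    -- only `(i, j)` survives: `c` vanishes below `j` by induction, and `qDeriv ^ j'` kills `X ^ j`
    -- for `j' > j`
    rw [Finset.sum_eq_single (i, j)] at h
    · simpa [hprod] using h
    · rintro ⟨i', j'⟩ - hne
      rcases lt_trichotomy j' j with hlt | rfl | hgt
      · simp [IH j' hlt i']
      · have : i ≠ i' := fun h => hne (by rw [h])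
        simp [this]
      · rw [Finset.prod_eq_zero (Finset.mem_range.mpr hgt) (by simp [qInt_zero])]
        simp
    · intro hi
      simp [Finsupp.notMem_support_iff.mp hi]

theorem qHeisRep_injective (hfree : ∀ n : ℕ, qInt K q (n + 1) ≠ 0) :
    Function.Injective (qHeisRep q) := by
  rw [injective_iff_map_eq_zero]
  intro x hx
  obtain ⟨c, rfl⟩ : x ∈ LinearMap.range
      (Finsupp.linearCombination K fun p : ℕ × ℕ => qB K q ^ p.1 * qA K q ^ p.2) := by
    rw [Finsupp.range_linearCombination,
      span_pow_mul_pow_eq_top q (qA_mul_qB q) (adjoin_qA_qB_eq_top q)]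
    trivial
  have hc : Finsupp.linearCombination K
      (fun p : ℕ × ℕ => LinearMap.mulLeft K (X : K[X]) ^ p.1 * qDeriv q ^ p.2) c = 0 := by
    rw [← hx, ← AlgHom.toLinearMap_apply, Finsupp.apply_linearCombination]
    congr 2
    funext p
    simp [qHeisRep_qA, qHeisRep_qB]
  rw [linearIndependent_iff.mp (linearIndependent_mulLeft_X_pow_mul_qDeriv_pow q hfree) c hc,
    map_zero]

end

theorem qHeis_center_trivial_of_free_type_general
    {K : Type*} [Field K] (q : K)
    (hfree : ∀ n : ℤ, n ≠ 0 → qInt K q n ≠ 0) :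
    Subalgebra.center K (qHeis K q) = ⊥ := by
  have hfree' (n : ℕ) : qInt K q (n + 1) ≠ 0 := hfree _ (by omega)
  refine le_antisymm (fun z hz => ?_) bot_le
  rw [Subalgebra.mem_center_iff] at hz
  have hX : Commute (qHeisRep q z) (LinearMap.mulLeft K X) :=
    qHeisRep_qB q ▸ (Commute.map (show Commute z (qB K q) from (hz _).symm) (qHeisRep q))
  have hD : Commute (qHeisRep q z) (qDeriv q) :=
    qHeisRep_qA q ▸ (Commute.map (show Commute z (qA K q) from (hz _).symm) (qHeisRep q))
  have hz_scalar := eq_algebraMap_of_commute_mulLeft_X_qDeriv q hfree' hX hD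
  exact Algebra.mem_bot.mpr
    ⟨_, qHeisRep_injective q hfree' (by rw [AlgHom.commutes, ← hz_scalar])⟩

/-- If `q` is of free type (`q ≠ 0` and `{n}_q ≠ 0` for every nonzero integer `n`), then
the center of the `q`-deformed Heisenberg algebra `H_q` over `K` is trivial, i.e. consists
exactly of the scalar multiples of the identity (the bottom `K`-subalgebra). -/
theorem qHeis_center_trivial_of_free_type
    {K : Type*} [Field K] (q : K) (hq : q ≠ 0)
    (hfree : ∀ n : ℤ, n ≠ 0 → qInt K q n ≠ 0) :
    Subalgebra.center K (qHeis K q) = ⊥ :=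
  qHeis_center_trivial_of_free_type_general q hfree
end
end

section
/- Let K be a field and q ∈ K, q ≠ 0. Then the center Z(H_q) of the q-deformed Heisenberg algebra H_q over K is an integral domain: it is a nontrivial commutative ring in which the product of any two nonzero elements is nonzero. -/
noncomputable section

/-!
The monomials `B^i A^j` form a `K`-basis of `H_q`. They span, since
`A B^(i+1) = q^(i+1) B^(i+1) A + [i+1]_q B^i` lets `A` move past powers of `B`; they are
independent, since `H_q` acts on `(ℕ × ℕ) →₀ K` by the formulas of left multiplication in these
coordinates, and this action sends `e₀₀` to `e_(i,j)` under `B^i A^j`.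
In this basis `B^i A^j · B^k A^l = q^(jk) B^(i+k) A^(j+l)` plus terms of lower `B`-degree.
Ordering exponents lexicographically with the `B`-degree first, leading exponents therefore add
and leading coefficients multiply up to a power of `q ≠ 0`, so `H_q` has no zero divisors;
neither, then, has its center.
-/

open Module

namespace Module.Basis

variable {R A ι : Type*} [CommSemiring R] [Semiring A] [Algebra R A]
  [AddCommMonoid ι] [LinearOrder ι] [IsOrderedCancelAddMonoid ι] (b : Basis ι R A)

theorem repr_mul_apply_add_of_le (hlt : ∀ m n p, m + n < p → b.repr (b m * b n) p = 0)
    {x y : A} {m₀ n₀ : ι} (hx : ∀ m ∈ (b.repr x).support, m ≤ m₀)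
    (hy : ∀ n ∈ (b.repr y).support, n ≤ n₀) :
    b.repr (x * y) (m₀ + n₀) = b.repr x m₀ * b.repr y n₀ * b.repr (b m₀ * b n₀) (m₀ + n₀) := by
  have hxy : b.repr (x * y) (m₀ + n₀) = ∑ m ∈ (b.repr x).support, ∑ n ∈ (b.repr y).support,
      b.repr x m * b.repr y n * b.repr (b m * b n) (m₀ + n₀) := by
    conv_lhs => rw [← b.linearCombination_repr x, ← b.linearCombination_repr y]
    simp only [Finsupp.linearCombination_apply, Finsupp.sum, Finset.sum_mul_sum,
      smul_mul_smul_comm, map_sum, map_smul, Finsupp.finsetSum_apply, Finsupp.smul_apply,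
      smul_eq_mul]
  rw [hxy, Finset.sum_eq_single m₀, Finset.sum_eq_single n₀]
  · intro n hn hne
    rw [hlt _ _ _ (add_lt_add_of_le_of_lt le_rfl (lt_of_le_of_ne (hy n hn) hne)), mul_zero]
  · intro hn
    rw [Finsupp.notMem_support_iff.mp hn, mul_zero, zero_mul]
  · intro m hm hne
    refine Finset.sum_eq_zero fun n hn => ?_
    rw [hlt _ _ _ (add_lt_add_of_lt_of_le (lt_of_le_of_ne (hx m hm) hne) (hy n hn)), mul_zero]
  · intro hm
    simp [Finsupp.notMem_support_iff.mp hm]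

theorem noZeroDivisors_of_repr_mul [NoZeroDivisors R]
    (hlt : ∀ m n p, m + n < p → b.repr (b m * b n) p = 0)
    (hlead : ∀ m n, b.repr (b m * b n) (m + n) ≠ 0) : NoZeroDivisors A := by
  refine ⟨fun {x y} hxy => ?_⟩
  by_contra! hne
  obtain ⟨hx, hy⟩ := hne
  have hsx := (b.repr x).support_nonempty_iff.mpr (b.repr.map_ne_zero_iff.mpr hx)
  have hsy := (b.repr y).support_nonempty_iff.mpr (b.repr.map_ne_zero_iff.mpr hy)
  set m₀ := (b.repr x).support.max' hsx
  set n₀ := (b.repr y).support.max' hsy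
  have hlc := b.repr_mul_apply_add_of_le hlt (m₀ := m₀) (n₀ := n₀)
    (fun m hm => (b.repr x).support.le_max' m hm) (fun n hn => (b.repr y).support.le_max' n hn)
  rw [hxy, map_zero, Finsupp.zero_apply] at hlc
  exact mul_ne_zero (mul_ne_zero (Finsupp.mem_support_iff.mp (Finset.max'_mem _ hsx))
    (Finsupp.mem_support_iff.mp (Finset.max'_mem _ hsy))) (hlead m₀ n₀) hlc.symm

end Module.Basis

theorem Finsupp.linearCombination_mem_of_mem_supported {R M α : Type*} [Semiring R]
    [AddCommMonoid M] [Module R M] {v : α → M} {s : Set α} {p : Submodule R M}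
    (hv : ∀ a ∈ s, v a ∈ p) {f : α →₀ R} (hf : f ∈ Finsupp.supported R R s) :
    Finsupp.linearCombination R v f ∈ p :=
  Submodule.span_le.mpr (by rintro _ ⟨a, ha, rfl⟩; exact hv a ha)
    ((Finsupp.mem_span_image_iff_linearCombination R).mpr ⟨f, hf, rfl⟩)

namespace qHeis

variable {K : Type*} [Field K] (q : K)

theorem qInt_zero : qInt K q 0 = 0 := by
  unfold qInt; split_ifs <;> simp

theorem qInt_natCast_succ (n : ℕ) : qInt K q (n + 1 : ℕ) = q * qInt K q n + 1 := by
  unfold qInt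
  split_ifs with hq
  · subst hq; push_cast; ring
  · have : q - 1 ≠ 0 := sub_ne_zero.mpr hq
    field_simp
    simp only [zpow_natCast]
    ring

theorem qInt_one : qInt K q 1 = 1 := by
  simpa [qInt_zero] using qInt_natCast_succ q 0

/- `Finsupp.single (i, j) 1` stands for `B^i A^j`; `opA` and `opB` are left multiplication by
`A` and `B` in these coordinates. -/
def opA : (ℕ × ℕ →₀ K) →ₗ[K] (ℕ × ℕ →₀ K) :=
  Finsupp.linearCombination K fun p =>
    Finsupp.single (p.1, p.2 + 1) (q ^ p.1) + Finsupp.single (p.1 - 1, p.2) (qInt K q p.1)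

def opB : (ℕ × ℕ →₀ K) →ₗ[K] (ℕ × ℕ →₀ K) :=
  Finsupp.linearCombination K fun p => Finsupp.single (p.1 + 1, p.2) 1

theorem opA_single (p : ℕ × ℕ) (c : K) :
    opA q (Finsupp.single p c) =
      Finsupp.single (p.1, p.2 + 1) (c * q ^ p.1) +
        Finsupp.single (p.1 - 1, p.2) (c * qInt K q p.1) := by
  simp [opA, Finsupp.smul_single]

theorem opB_single (p : ℕ × ℕ) (c : K) :
    opB (Finsupp.single p c) = Finsupp.single (p.1 + 1, p.2) c := by
  simp [opB, Finsupp.smul_single]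

theorem opA_mul_opB : opA q * opB = q • (opB * opA q) + 1 := by
  refine Finsupp.lhom_ext fun ⟨i, j⟩ c => ?_
  simp only [Module.End.mul_apply, LinearMap.add_apply, LinearMap.smul_apply,
    Module.End.one_apply, opB_single, opA_single, map_add, smul_add, Finsupp.smul_single,
    smul_eq_mul, Nat.add_sub_cancel]
  rcases i with _ | i
  · simp only [qInt_natCast_succ, qInt_zero, Nat.cast_zero, mul_zero, zero_add,
      Finsupp.single_zero, add_zero, pow_one, pow_zero, mul_one, mul_comm c q]
  · simp only [qInt_natCast_succ, Nat.add_sub_cancel]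
    rw [add_assoc _ (Finsupp.single (i + 1, j) _), ← Finsupp.single_add]
    congr 2 <;> ring

def rep : qHeis K q →ₐ[K] Module.End K (ℕ × ℕ →₀ K) :=
  RingQuot.liftAlgHom K ⟨FreeAlgebra.lift K ![opA q, opB], by
    rintro _ _ ⟨⟩
    simpa using opA_mul_opB q⟩

theorem rep_qA : rep q (qA K q) = opA q := by
  simp [rep, qA]

theorem rep_qB : rep q (qB K q) = opB := by
  simp [rep, qB]

def bDegreeLT (d : ℕ) : Submodule K (ℕ × ℕ →₀ K) := Finsupp.supported K K {p | p.1 < d}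

theorem bDegreeLT_zero : bDegreeLT (K := K) 0 = ⊥ := by
  simp [bDegreeLT]

theorem apply_eq_zero_of_mem_bDegreeLT {d : ℕ} {f : ℕ × ℕ →₀ K} (hf : f ∈ bDegreeLT d)
    {p : ℕ × ℕ} (hp : d ≤ p.1) : f p = 0 :=
  Finsupp.notMem_support_iff.mp fun h => (hf h).not_ge hp

theorem opA_mem_bDegreeLT {d : ℕ} {f : ℕ × ℕ →₀ K} (hf : f ∈ bDegreeLT d) :
    opA q f ∈ bDegreeLT d :=
  Finsupp.linearCombination_mem_of_mem_supported (s := {p : ℕ × ℕ | p.1 < d})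
    (fun p (hp : p.1 < d) => add_mem (Finsupp.single_mem_supported K _ hp)
      (Finsupp.single_mem_supported K _ (show p.1 - 1 < d by omega))) hf

theorem opB_mem_bDegreeLT {d : ℕ} {f : ℕ × ℕ →₀ K} (hf : f ∈ bDegreeLT d) :
    opB f ∈ bDegreeLT (d + 1) :=
  Finsupp.linearCombination_mem_of_mem_supported (s := {p : ℕ × ℕ | p.1 < d})
    (fun p (hp : p.1 < d) => Finsupp.single_mem_supported K _ (show p.1 + 1 < d + 1 by omega)) hf

theorem opB_pow_single (i : ℕ) (p : ℕ × ℕ) (c : K) :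
    (opB ^ i) (Finsupp.single p c) = Finsupp.single (p.1 + i, p.2) c := by
  induction i with
  | zero => simp
  | succ i ih => rw [pow_succ', Module.End.mul_apply, ih, opB_single, add_assoc]

theorem opB_pow_mem_bDegreeLT {d : ℕ} {f : ℕ × ℕ →₀ K} (hf : f ∈ bDegreeLT d) (i : ℕ) :
    (opB ^ i) f ∈ bDegreeLT (d + i) := by
  induction i with
  | zero => simpa using hf
  | succ i ih => rw [pow_succ', Module.End.mul_apply, ← add_assoc]; exact opB_mem_bDegreeLT ih

theorem opA_single_sub_mem (k l : ℕ) (c : K) :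
    opA q (Finsupp.single (k, l) c) - Finsupp.single (k, l + 1) (c * q ^ k) ∈ bDegreeLT k := by
  rw [opA_single, add_sub_cancel_left]
  rcases k with _ | k
  · simp [qInt_zero]
  · exact Finsupp.single_mem_supported K _ (show k + 1 - 1 < k + 1 by omega)

theorem opA_pow_single_sub_mem (j k l : ℕ) :
    (opA q ^ j) (Finsupp.single (k, l) 1) - Finsupp.single (k, l + j) (q ^ (j * k))
      ∈ bDegreeLT k := by
  induction j with
  | zero => simp
  | succ j ih =>
    have h := add_mem (opA_mem_bDegreeLT q ih) (opA_single_sub_mem q k (l + j) (q ^ (j * k)))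
    rwa [map_sub, sub_add_sub_cancel, ← Module.End.mul_apply, ← pow_succ', ← pow_add,
      ← add_one_mul, add_assoc] at h

def monomial (p : ℕ × ℕ) : qHeis K q := qB K q ^ p.1 * qA K q ^ p.2

theorem monomial_zero : monomial q 0 = 1 := by
  simp [monomial]

theorem rep_monomial (p : ℕ × ℕ) : rep q (monomial q p) = opB ^ p.1 * opA q ^ p.2 := by
  rw [monomial, map_mul, map_pow, map_pow, rep_qA, rep_qB]

theorem rep_monomial_single_sub_mem (m n : ℕ × ℕ) :
    rep q (monomial q m) (Finsupp.single n 1) - Finsupp.single (m + n) (q ^ (m.2 * n.1))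
      ∈ bDegreeLT (m.1 + n.1) := by
  have h := opB_pow_mem_bDegreeLT (opA_pow_single_sub_mem q m.2 n.1 n.2) m.1
  rwa [map_sub, opB_pow_single, ← Module.End.mul_apply, ← rep_monomial, add_comm n.1,
    add_comm n.2, ← Prod.mk_add_mk] at h

def coeffs : qHeis K q →ₗ[K] (ℕ × ℕ →₀ K) :=
  LinearMap.applyₗ (Finsupp.single 0 1) ∘ₗ (rep q).toLinearMap

theorem coeffs_apply (x : qHeis K q) : coeffs q x = rep q x (Finsupp.single 0 1) := rfl

theorem coeffs_mul (x y : qHeis K q) : coeffs q (x * y) = rep q x (coeffs q y) := by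
  rw [coeffs_apply, coeffs_apply, map_mul, Module.End.mul_apply]

theorem coeffs_monomial (p : ℕ × ℕ) : coeffs q (monomial q p) = Finsupp.single p 1 := by
  have h := opA_pow_single_sub_mem q p.2 0 0
  rw [bDegreeLT_zero, Submodule.mem_bot, sub_eq_zero] at h
  rw [coeffs_apply, rep_monomial, Module.End.mul_apply, Prod.zero_eq_mk, h, opB_pow_single]
  simp

theorem coeffs_monomial_mul_monomial_apply {m n p : ℕ × ℕ} (hp : m.1 + n.1 ≤ p.1) :
    coeffs q (monomial q m * monomial q n) p = Finsupp.single (m + n) (q ^ (m.2 * n.1)) p := by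
  rw [coeffs_mul, coeffs_monomial, ← sub_eq_zero, ← Finsupp.sub_apply]
  exact apply_eq_zero_of_mem_bDegreeLT (rep_monomial_single_sub_mem q m n) hp

theorem qA_mul_qB : qA K q * qB K q = q • (qB K q * qA K q) + 1 := by
  simpa only [map_mul, map_add, map_smul, map_one, qA, qB] using
    RingQuot.mkAlgHom_rel K (qHeisRel.rel (K := K) (q := q))

theorem qA_mul_qB_pow_succ (i : ℕ) :
    qA K q * qB K q ^ (i + 1) =
      q ^ (i + 1) • (qB K q ^ (i + 1) * qA K q) + qInt K q (i + 1 : ℕ) • qB K q ^ i := by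
  induction i with
  | zero => simpa [qInt_one] using qA_mul_qB q
  | succ i ih =>
    rw [pow_succ' (qB K q) (i + 1), ← mul_assoc, qA_mul_qB, add_mul, one_mul, smul_mul_assoc,
      mul_assoc, ih, mul_add, mul_smul_comm, mul_smul_comm, ← mul_assoc, ← pow_succ',
      ← pow_succ', qInt_natCast_succ q (i + 1)]
    module

theorem qA_mul_monomial_mem (p : ℕ × ℕ) :
    qA K q * monomial q p ∈ Submodule.span K (Set.range (monomial q)) := by
  obtain ⟨_ | i, j⟩ := p
  · rw [monomial, pow_zero, one_mul, ← pow_succ']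
    exact Submodule.subset_span ⟨(0, j + 1), by simp [monomial]⟩
  · change qA K q * (qB K q ^ (i + 1) * qA K q ^ j) ∈ _
    rw [← mul_assoc, qA_mul_qB_pow_succ, add_mul, smul_mul_assoc, smul_mul_assoc,
      mul_assoc, ← pow_succ']
    exact add_mem (Submodule.smul_mem _ _ (Submodule.subset_span ⟨(i + 1, j + 1), rfl⟩))
      (Submodule.smul_mem _ _ (Submodule.subset_span ⟨(i, j), rfl⟩))

theorem span_range_monomial : Submodule.span K (Set.range (monomial q)) = ⊤ := by
  set S := Submodule.span K (Set.range (monomial q))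
  have mul_mem_of_monomial (x : qHeis K q) (hx : ∀ p, x * monomial q p ∈ S) :
      ∀ s ∈ S, x * s ∈ S :=
    (Submodule.span_le (p := S.comap (LinearMap.mulLeft K x))).mpr
      (by rintro _ ⟨p, rfl⟩; exact hx p)
  have mul_mem (x : qHeis K q) : ∀ s ∈ S, x * s ∈ S := by
    obtain ⟨x, rfl⟩ := RingQuot.mkAlgHom_surjective K (qHeisRel K q) x
    induction x using FreeAlgebra.induction with
    | grade0 r =>
      intro s hs
      rw [AlgHom.commutes, Algebra.algebraMap_eq_smul_one, smul_one_mul]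
      exact S.smul_mem r hs
    | grade1 i =>
      apply mul_mem_of_monomial
      fin_cases i
      · exact qA_mul_monomial_mem q
      · intro p
        change qB K q * (qB K q ^ p.1 * qA K q ^ p.2) ∈ S
        rw [← mul_assoc, ← pow_succ']
        exact Submodule.subset_span ⟨(p.1 + 1, p.2), rfl⟩
    | mul x y hx hy => intro s hs; rw [map_mul, mul_assoc]; exact hx _ (hy s hs)
    | add x y hx hy => intro s hs; rw [map_add, add_mul]; exact S.add_mem (hx s hs) (hy s hs)
  rw [eq_top_iff]
  intro x _
  simpa using mul_mem x 1 (Submodule.subset_span ⟨0, monomial_zero q⟩)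

theorem linearIndependent_monomial : LinearIndependent K (monomial q) :=
  LinearIndependent.of_comp (coeffs q) <| by
    convert Finsupp.linearIndependent_single_one K (ℕ × ℕ)
    exact coeffs_monomial q _

def pbwBasis : Basis (ℕ × ℕ) K (qHeis K q) :=
  .mk (linearIndependent_monomial q) (span_range_monomial q).ge

theorem pbwBasis_apply (p : ℕ × ℕ) : pbwBasis q p = monomial q p :=
  Basis.mk_apply _ _ p

theorem pbwBasis_repr (x : qHeis K q) : (pbwBasis q).repr x = coeffs q x := by
  have h : (pbwBasis q).repr.toLinearMap = coeffs q :=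
    (pbwBasis q).ext fun p => by
      rw [LinearEquiv.coe_coe, Basis.repr_self, pbwBasis_apply, coeffs_monomial]
  exact LinearMap.congr_fun h x

theorem noZeroDivisors (hq : q ≠ 0) : NoZeroDivisors (qHeis K q) := by
  set b := (pbwBasis q).reindex toLex
  have hb (m n p : ℕ × ℕ) :
      b.repr (b (toLex m) * b (toLex n)) (toLex p) = coeffs q (monomial q m * monomial q n) p := by
    simp [b, Basis.reindex_apply, pbwBasis_repr, pbwBasis_apply]
  refine b.noZeroDivisors_of_repr_mul (fun m n p hp => ?_) fun m n => ?_
  · obtain ⟨m, rfl⟩ := toLex.surjective m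
    obtain ⟨n, rfl⟩ := toLex.surjective n
    obtain ⟨p, rfl⟩ := toLex.surjective p
    rw [← toLex_add] at hp
    rw [hb, coeffs_monomial_mul_monomial_apply q (Prod.Lex.toLex_lt_toLex'.mp hp).1,
      Finsupp.single_eq_of_ne (by rintro rfl; exact lt_irrefl _ hp)]
  · obtain ⟨m, rfl⟩ := toLex.surjective m
    obtain ⟨n, rfl⟩ := toLex.surjective n
    rw [← toLex_add, hb, coeffs_monomial_mul_monomial_apply q le_rfl, Finsupp.single_eq_same]
    exact pow_ne_zero _ hq

end qHeis

/-- For every field `K` and `q ∈ K`, `q ≠ 0`, the center `Z(H_q)` of the `q`-deformed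
Heisenberg algebra is an integral domain: a nontrivial (commutative) ring in which the
product of any two nonzero elements is nonzero. -/
theorem qHeis_center_isDomain
    {K : Type*} [Field K] (q : K) (hq : q ≠ 0) :
    IsDomain (Subalgebra.center K (qHeis K q)) := by
  have := qHeis.noZeroDivisors q hq
  have := nontrivial_of_ne _ _ ((qHeis.pbwBasis q).ne_zero 0)
  have := NoZeroDivisors.to_isDomain (qHeis K q)
  infer_instance
end
end
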